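/- Let S be a positive Markov martingale with kernel K, and define the default function M_S(x) := lim_{n→∞} E_x[(S_n − S_∞) 1_{{S_n ≥ S_{n-1} ≥ ⋯ ≥ S_1 ≥ x}}]. Then M_S solves the homogeneous Volterra integral equation M_S(x) = ∫_{[x,∞)} M_S(y) K(x,dy) for all x > 0. -/

import Mathlib

open MeasureTheory Filter Set

noncomputable section

variable {Ω : Type*}

/-- Evaluation of a discrete-time process at a possibly infinite random time `τ`,
using the limit variable `Sinf` on the event `{τ = ∞}`. -/
def evalAt (S : ℕ → Ω → ℝ) (Sinf : Ω → ℝ) (τ : Ω → ℕ∞) (ω : Ω) : ℝ :=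
  if τ ω = ⊤ then Sinf ω else S (τ ω).toNat ω

/-- The `k`-th drawdown time of `S`: `τ₀ = 0` and
`τ_k = inf {j > τ_{k-1} : S_j < S_{j-1}}` (with value `∞` if no such `j` exists). -/
def drawdown (S : ℕ → Ω → ℝ) : ℕ → Ω → ℕ∞
  | 0 => fun _ => 0
  | (k + 1) => fun ω =>
      sInf {j : ℕ∞ | drawdown S k ω < j ∧ ∃ n : ℕ, j = (n : ℕ∞) ∧ S n ω < S (n - 1) ω}

/-- The first drawdown of `S` after the deterministic time `k`:
`τ̃_k = inf {j > k : S_j < S_{j-1}}`. -/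
def drawdownAfter (S : ℕ → Ω → ℝ) (k : ℕ) (ω : Ω) : ℕ∞ :=
  sInf {j : ℕ∞ | (k : ℕ∞) < j ∧ ∃ n : ℕ, j = (n : ℕ∞) ∧ S n ω < S (n - 1) ω}

/-- The process stopped at a possibly infinite random time. -/
def stoppedAt (S : ℕ → Ω → ℝ) (τ : Ω → ℕ∞) (n : ℕ) (ω : Ω) : ℝ :=
  S ((min (n : ℕ∞) (τ ω)).toNat) ω

/-- The event `{S_k ≤ S_{k+1} ≤ ⋯ ≤ S_n}`. -/
def monoEvent (S : ℕ → Ω → ℝ) (k n : ℕ) : Set Ω :=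
  {ω | ∀ j, k ≤ j → j < n → S j ω ≤ S (j + 1) ω}

/-- `S` is a bubble under `P`: it loses mass at its `k`-th drawdown time for some `k ≥ 1`. -/
def IsBubble [MeasurableSpace Ω] (S : ℕ → Ω → ℝ) (Sinf : Ω → ℝ) (P : Measure Ω) : Prop :=
  ∃ k : ℕ, ∫ ω, evalAt S Sinf (drawdown S (k + 1)) ω ∂P < ∫ ω, S 0 ω ∂P

end

noncomputable section

open ProbabilityTheory

/-- A positive time-homogeneous Markov martingale on `(0, ∞)` with transition kernel `K`,
together with its family of laws `P x` (start at `x`) and the a.s. limit `Sinf`. -/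
structure MarkovMartingale (Ω : Type*) [m0 : MeasurableSpace Ω] where
  P : ℝ → Measure Ω
  F : Filtration ℕ m0
  S : ℕ → Ω → ℝ
  Sinf : Ω → ℝ
  K : Kernel ℝ ℝ
  markov : IsMarkovKernel K
  prob : ∀ x, 0 < x → IsProbabilityMeasure (P x)
  pos : ∀ x, 0 < x → ∀ᵐ ω ∂P x, ∀ n, 0 < S n ω
  start : ∀ x, 0 < x → ∀ᵐ ω ∂P x, S 0 ω = x
  mart : ∀ x, 0 < x → Martingale S F (P x)
  conv : ∀ x, 0 < x → ∀ᵐ ω ∂P x, Tendsto (fun n => S n ω) atTop (nhds (Sinf ω))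
  kernel_pos : ∀ x, 0 < x → K x (Set.Iic 0) = 0
  kernel_int : ∀ x, 0 < x → Integrable id (K x)
  kernel_mart : ∀ x, 0 < x → ∫ y, y ∂(K x) = x
  step : ∀ x, 0 < x → ∀ n : ℕ, ∀ g : ℝ → ℝ, Measurable g → (∃ C, ∀ y, |g y| ≤ C) →
    (P x)[fun ω => g (S (n + 1) ω) | F n] =ᵐ[P x] fun ω => ∫ y, g y ∂(K (S n ω))

namespace MarkovMartingale

variable {Ω : Type*} [MeasurableSpace Ω]

/-- The probability `a(x) = K(x, [0,x))` of a downward move from `x`. -/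
def a (M : MarkovMartingale Ω) (x : ℝ) : ℝ := (M.K x (Set.Ico 0 x)).toReal

/-- The relative recovery `b(x) = (1/x) ∫_{[0,x)} y K(x,dy)` upon a downward move. -/
def b (M : MarkovMartingale Ω) (x : ℝ) : ℝ := (1 / x) * ∫ y in Set.Ico 0 x, y ∂(M.K x)

/-- The relaxed relative recovery `b_ε(x) = (1/x) ∫_{[0,x(1+ε))} y K(x,dy)`. -/
def bEps (M : MarkovMartingale Ω) (ε x : ℝ) : ℝ :=
  (1 / x) * ∫ y in Set.Ico 0 (x * (1 + ε)), y ∂(M.K x)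

/-- `S` is a bubble under `P_x`. -/
def Bubble (M : MarkovMartingale Ω) (x : ℝ) : Prop := IsBubble M.S M.Sinf (M.P x)

/-- `S` is `P_x`-a.s. bounded. -/
def Bounded (M : MarkovMartingale Ω) (x : ℝ) : Prop :=
  ∃ C : ℝ, ∀ᵐ ω ∂M.P x, ∀ n, M.S n ω ≤ C

/-- The default function `M_S(x) = x - E_x[S_{τ₁}]`, the loss of mass at the first
drawdown. -/
def defaultFn (M : MarkovMartingale Ω) (x : ℝ) : ℝ :=
  x - ∫ ω, evalAt M.S M.Sinf (drawdown M.S 1) ω ∂(M.P x)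

/-- The assumption that the downward-move probability `a` is locally bounded away from zero
above a level `xa`. -/
def ALowerBound (M : MarkovMartingale Ω) (xa : ℝ) : Prop :=
  0 < xa ∧ ∀ y, xa < y → ∃ c > (0 : ℝ), ∀ x ∈ Set.Icc xa y, c ≤ M.a x

end MarkovMartingale

end

/-!
Under `P_x` the first step either goes down, and then `τ₁ = 1`, or goes up to some `z ≥ x`, from
where the chain starts afresh. Hence `F(x) = E_x[S_{τ₁}]` should satisfy the first-step equation
`F(x) = ∫_{[0,x)} z K(x,dz) + ∫_{[x,∞)} F(z) K(x,dz)`, and subtracting it from `x = ∫ z K(x,dz)`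
gives the Volterra equation for `M_S = x - F`.

Only a one-step Markov property is available, so the first-step analysis is carried out on finite
horizons: the joint law of `(S_j, S_{j+1})` on an `F_j`-event is `law(S_j) ⊗ K`, which expresses
`E_x[h(S_{τ₁ ∧ n})]` through iterates of `g ↦ ∫_{[u,∞)} g dK(u)`, and this expression satisfies the
first-step recursion exactly. Let `n → ∞` for bounded continuous `h`, then let `h` increase to the
identity; the domination needed for the second limit is `E_x[S_{τ₁}] ≤ x`, from Fatou's lemma and
`E_x[S_{τ₁ ∧ n}] = x`.
-/

open ProbabilityTheory Topology

section FirstDrawdown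

variable {Ω : Type*}

theorem monoEvent_succ (S : ℕ → Ω → ℝ) {k n : ℕ} (hkn : k ≤ n) :
    monoEvent S k (n + 1) = monoEvent S k n ∩ {ω | S n ω ≤ S (n + 1) ω} := by
  ext ω
  simp only [monoEvent, mem_ofPred_eq, mem_inter_iff]
  refine ⟨fun h => ⟨fun j hkj hj => h j hkj (by omega), h n hkn (by omega)⟩, ?_⟩
  rintro ⟨h, hn⟩ j hkj hj
  rcases Nat.lt_succ_iff_lt_or_eq.mp hj with hj | rfl
  exacts [h j hkj hj, hn]

theorem natCast_lt_drawdown_one_iff (S : ℕ → Ω → ℝ) (n : ℕ) (ω : Ω) :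
    (n : ℕ∞) < drawdown S 1 ω ↔ ω ∈ monoEvent S 0 n := by
  simp only [drawdown, monoEvent, mem_ofPred_eq, zero_le, true_imp_iff]
  constructor
  · intro h j hj
    by_contra! hdown
    have := h.trans_le (sInf_le ⟨by simp, j + 1, rfl, by simpa using hdown⟩)
    exact absurd (by exact_mod_cast this : n < j + 1) (by omega)
  · intro h
    refine ((ENat.lt_add_one_iff (ENat.natCast_ne_top n)).mpr le_rfl).trans_le (le_sInf ?_)
    rintro _ ⟨hi0, i, rfl, hi⟩
    by_contra! hlt
    have hi0 : 0 < i := by exact_mod_cast hi0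
    have hin : i < n + 1 := by exact_mod_cast hlt
    have := h (i - 1) (by omega)
    rw [Nat.sub_add_cancel hi0] at this
    exact (not_le.mpr hi) this

theorem measurableSet_monoEvent {m : MeasurableSpace Ω} {S : ℕ → Ω → ℝ} {k n : ℕ}
    (hS : ∀ j ≤ n, Measurable (S j)) : MeasurableSet (monoEvent S k n) := by
  have : monoEvent S k n = ⋂ j ∈ Ico k n, {ω | S j ω ≤ S (j + 1) ω} := by
    ext ω; simp [monoEvent, and_imp]
  rw [this]
  exact .biInter (to_countable _) fun j hj =>
    measurableSet_le (hS j (mem_Ico.mp hj).2.le) (hS (j + 1) (mem_Ico.mp hj).2)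

theorem stoppedAt_of_le {S : ℕ → Ω → ℝ} {τ : Ω → ℕ∞} {n : ℕ} {ω : Ω}
    (h : (n : ℕ∞) ≤ τ ω) : stoppedAt S τ n ω = S n ω := by
  simp [stoppedAt, min_eq_left h]

theorem stoppedAt_zero (S : ℕ → Ω → ℝ) (τ : Ω → ℕ∞) : stoppedAt S τ 0 = S 0 :=
  funext fun _ => stoppedAt_of_le (by simp)

theorem stoppedAt_succ (S : ℕ → Ω → ℝ) (τ : Ω → ℕ∞) (n : ℕ) (ω : Ω) :
    stoppedAt S τ (n + 1) ω
      = if (n : ℕ∞) < τ ω then S (n + 1) ω else stoppedAt S τ n ω := by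
  split_ifs with h
  · exact stoppedAt_of_le (Order.add_one_le_of_lt h)
  · push Not at h
    simp only [stoppedAt, Nat.cast_add, Nat.cast_one, min_eq_right h,
      min_eq_right (h.trans le_self_add)]

theorem tendsto_stoppedAt_evalAt {S : ℕ → Ω → ℝ} {Sinf : Ω → ℝ} (τ : Ω → ℕ∞) {ω : Ω}
    (hS : Tendsto (S · ω) atTop (𝓝 (Sinf ω))) :
    Tendsto (stoppedAt S τ · ω) atTop (𝓝 (evalAt S Sinf τ ω)) := by
  by_cases hτ : τ ω = ⊤
  · simpa [evalAt, hτ, stoppedAt_of_le] using hS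
  · rw [evalAt, if_neg hτ]
    refine tendsto_atTop_of_eventually_const (i₀ := (τ ω).toNat) fun n hn => ?_
    rw [stoppedAt, min_eq_right ((ENat.natCast_toNat hτ).symm.le.trans (by exact_mod_cast hn))]

theorem comp_stoppedAt_drawdown_succ (S : ℕ → Ω → ℝ) (f : ℝ → ℝ) (n : ℕ) (ω : Ω) :
    f (stoppedAt S (drawdown S 1) (n + 1) ω) = f (stoppedAt S (drawdown S 1) n ω)
      + (monoEvent S 0 n).indicator (fun ω => f (S (n + 1) ω) - f (S n ω)) ω := by
  rw [stoppedAt_succ]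
  by_cases h : ω ∈ monoEvent S 0 n
  · have hlt := (natCast_lt_drawdown_one_iff S n ω).mpr h
    rw [if_pos hlt, indicator_of_mem h, stoppedAt_of_le hlt.le, add_sub_cancel]
  · rw [if_neg (mt (natCast_lt_drawdown_one_iff S n ω).mp h), indicator_of_notMem h, add_zero]

variable [MeasurableSpace Ω] {S : ℕ → Ω → ℝ} {μ : Measure Ω} {f : ℝ → ℝ}

theorem integrable_comp_stoppedAt_drawdown (hS : ∀ n, Measurable (S n))
    (hf : ∀ n, Integrable (fun ω => f (S n ω)) μ) (n : ℕ) :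
    Integrable (fun ω => f (stoppedAt S (drawdown S 1) n ω)) μ := by
  induction n with
  | zero => simpa [stoppedAt_zero] using hf 0
  | succ n ih =>
    simp_rw [comp_stoppedAt_drawdown_succ]
    exact ih.add (((hf (n + 1)).sub (hf n)).indicator
      (measurableSet_monoEvent fun j _ => hS j))

theorem measurable_stoppedAt_drawdown (hS : ∀ n, Measurable (S n)) (n : ℕ) :
    Measurable (stoppedAt S (drawdown S 1) n) := by
  induction n with
  | zero => rw [stoppedAt_zero]; exact hS 0
  | succ n ih =>
    have hsucc : stoppedAt S (drawdown S 1) (n + 1) = fun ω => stoppedAt S (drawdown S 1) n ω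
        + (monoEvent S 0 n).indicator (fun ω => S (n + 1) ω - S n ω) ω :=
      funext (comp_stoppedAt_drawdown_succ S id n)
    rw [hsucc]
    exact ih.add (((hS (n + 1)).sub (hS n)).indicator (measurableSet_monoEvent fun j _ => hS j))

theorem integral_comp_stoppedAt_drawdown_succ (hS : ∀ n, Measurable (S n))
    (hf : ∀ n, Integrable (fun ω => f (S n ω)) μ) (n : ℕ) :
    ∫ ω, f (stoppedAt S (drawdown S 1) (n + 1) ω) ∂μ
      = ∫ ω, f (stoppedAt S (drawdown S 1) n ω) ∂μ
        + (∫ ω in monoEvent S 0 n, f (S (n + 1) ω) ∂μ - ∫ ω in monoEvent S 0 n, f (S n ω) ∂μ) := by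
  have hmono := measurableSet_monoEvent (k := 0) (n := n) fun j _ => hS j
  have hdiff : Integrable (fun ω => f (S (n + 1) ω) - f (S n ω)) μ := (hf (n + 1)).sub (hf n)
  simp_rw [comp_stoppedAt_drawdown_succ]
  rw [integral_add (integrable_comp_stoppedAt_drawdown hS hf n) (hdiff.indicator hmono),
    integral_indicator hmono,
    integral_sub (hf (n + 1)).integrableOn (hf n).integrableOn]

end FirstDrawdown

section

variable {α : Type*} [MeasurableSpace α]

def BoundedMeasurable (g : α → ℝ) : Prop := Measurable g ∧ ∃ C, ∀ a, |g a| ≤ C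

namespace BoundedMeasurable

variable {g h : α → ℝ}

theorem integrable (hg : BoundedMeasurable g) (μ : Measure α) [IsFiniteMeasure μ] :
    Integrable g μ :=
  let ⟨C, hC⟩ := hg.2
  .of_bound hg.1.aestronglyMeasurable C (.of_forall hC)

theorem comp {β : Type*} [MeasurableSpace β] (hg : BoundedMeasurable g) {f : β → α}
    (hf : Measurable f) : BoundedMeasurable (fun b => g (f b)) :=
  ⟨hg.1.comp hf, hg.2.imp fun _ hC b => hC (f b)⟩

theorem add (hg : BoundedMeasurable g) (hh : BoundedMeasurable h) :
    BoundedMeasurable (fun a => g a + h a) := by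
  obtain ⟨⟨C, hC⟩, ⟨D, hD⟩⟩ := And.intro hg.2 hh.2
  exact ⟨hg.1.add hh.1, C + D, fun a => (abs_add_le _ _).trans (add_le_add (hC a) (hD a))⟩

theorem finset_sum {ι : Type*} (s : Finset ι) {g : ι → α → ℝ}
    (hg : ∀ i ∈ s, BoundedMeasurable (g i)) : BoundedMeasurable (fun a => ∑ i ∈ s, g i a) := by
  classical
  induction s using Finset.induction_on with
  | empty => exact ⟨measurable_const, 0, by simp⟩
  | insert i s hi ih =>
    simp_rw [Finset.sum_insert hi]
    exact (hg i (by simp)).add (ih fun j hj => hg j (by simp [hj]))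

theorem indicator (hg : BoundedMeasurable g) {s : Set α} (hs : MeasurableSet s) :
    BoundedMeasurable (s.indicator g) := by
  obtain ⟨C, hC⟩ := hg.2
  refine ⟨hg.1.indicator hs, C, fun a => ?_⟩
  by_cases ha : a ∈ s
  · simpa [ha] using hC a
  · simpa [ha] using (abs_nonneg _).trans (hC a)

theorem integral_kernel {β : Type*} [MeasurableSpace β] {κ : Kernel α β} [IsMarkovKernel κ]
    {f : α × β → ℝ} (hf : BoundedMeasurable f) :
    BoundedMeasurable (fun a => ∫ b, f (a, b) ∂κ a) := by
  obtain ⟨C, hC⟩ := hf.2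
  refine ⟨hf.1.stronglyMeasurable.integral_kernel_prod_right'.measurable, C, fun a => ?_⟩
  simpa using norm_integral_le_of_norm_le_const (μ := κ a)
    (.of_forall fun b => (Real.norm_eq_abs _).trans_le (hC (a, b)))

end BoundedMeasurable

end

theorem ae_restrict_Ici_pos {μ : Measure ℝ} {x : ℝ} (hx : 0 < x) :
    ∀ᵐ z ∂μ.restrict (Ici x), 0 < z :=
  ae_restrict_of_forall_mem measurableSet_Ici fun _ hz => hx.trans_le hz

def truncAt (m : ℕ) (z : ℝ) : ℝ := max 0 (min z m)

theorem continuous_truncAt (m : ℕ) : Continuous (truncAt m) :=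
  continuous_const.max (continuous_id.min continuous_const)

theorem boundedMeasurable_truncAt (m : ℕ) : BoundedMeasurable (truncAt m) :=
  ⟨(continuous_truncAt m).measurable, m, fun _ =>
    abs_le.mpr ⟨(neg_nonpos.mpr (Nat.cast_nonneg m)).trans (le_max_left _ _),
      max_le (Nat.cast_nonneg m) (min_le_right _ _)⟩⟩

theorem abs_truncAt_le (m : ℕ) (z : ℝ) : |truncAt m z| ≤ |z| := by
  rw [truncAt, abs_of_nonneg (le_max_left _ _)]
  exact max_le (abs_nonneg z) ((min_le_left _ _).trans (le_abs_self z))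

theorem tendsto_truncAt (z : ℝ) : Tendsto (truncAt · z) atTop (𝓝 (max 0 z)) :=
  tendsto_atTop_of_eventually_const (i₀ := ⌈z⌉₊) fun m hm => by
    rw [truncAt, min_eq_left ((Nat.le_ceil z).trans (by exact_mod_cast hm))]

namespace MarkovMartingale

variable {Ω : Type*} [MeasurableSpace Ω] (M : MarkovMartingale Ω) {x : ℝ}

theorem stronglyAdapted : StronglyAdapted M.F M.S := (M.mart 1 one_pos).stronglyAdapted

theorem measurable_S (n : ℕ) : Measurable (M.S n) :=
  ((M.stronglyAdapted n).mono (M.F.le n)).measurable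

theorem measure_inter_preimage_succ (hx : 0 < x) {j : ℕ} {A : Set Ω}
    (hA : MeasurableSet[M.F j] A) {t : Set ℝ} (ht : MeasurableSet t) :
    M.P x (A ∩ M.S (j + 1) ⁻¹' t) = ∫⁻ ω in A, M.K (M.S j ω) t ∂M.P x := by
  have := M.prob x hx
  have := M.markov
  have hind : BoundedMeasurable (t.indicator (1 : ℝ → ℝ)) :=
    BoundedMeasurable.indicator ⟨measurable_const, 1, fun _ => abs_one.le⟩ ht
  have hstep := M.step x hx j _ hind.1 hind.2
  have hint := (hind.comp (M.measurable_S (j + 1))).integrable (M.P x)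
  have hcond : ∫ ω in A, t.indicator 1 (M.S (j + 1) ω) ∂M.P x
      = ∫ ω in A, (M.K (M.S j ω)).real t ∂M.P x := by
    rw [← setIntegral_condExp (M.F.le j) hint hA]
    refine setIntegral_congr_ae (M.F.le j _ hA) (hstep.mono fun ω hω _ => ?_)
    exact hω.trans (integral_indicator_one ht)
  have hK : Measurable fun ω => M.K (M.S j ω) t :=
    (M.K.measurable_coe ht).comp (M.measurable_S j)
  have hfin : ∫⁻ ω in A, M.K (M.S j ω) t ∂M.P x ≠ ⊤ := by
    refine ne_top_of_le_ne_top (measure_ne_top (M.P x) A) ?_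
    calc ∫⁻ ω in A, M.K (M.S j ω) t ∂M.P x ≤ ∫⁻ _ in A, 1 ∂M.P x :=
          lintegral_mono fun _ => prob_le_one
      _ = M.P x A := by simp
  rw [← ENNReal.toReal_eq_toReal_iff' (measure_ne_top _ _) hfin,
    ← integral_toReal hK.aemeasurable (.of_forall fun ω => measure_lt_top _ _)]
  have hpre : (fun ω => t.indicator (1 : ℝ → ℝ) (M.S (j + 1) ω))
      = (M.S (j + 1) ⁻¹' t).indicator 1 := rfl
  simp only [← measureReal_def, ← hcond, hpre]
  rw [integral_indicator_one (M.measurable_S (j + 1) ht), measureReal_restrict_apply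
    (M.measurable_S (j + 1) ht), inter_comm]

theorem map_restrict_pair_eq_compProd (hx : 0 < x) {j : ℕ} {A : Set Ω}
    (hA : MeasurableSet[M.F j] A) :
    ((M.P x).restrict A).map (fun ω => (M.S j ω, M.S (j + 1) ω))
      = ((M.P x).restrict A).map (M.S j) ⊗ₘ M.K := by
  have := M.prob x hx
  have := M.markov
  have hpair := (M.measurable_S j).prodMk (M.measurable_S (j + 1))
  refine Measure.ext_prod fun {s t} hs ht => ?_
  rw [Measure.map_apply hpair (hs.prod ht), Measure.restrict_apply (hpair (hs.prod ht)),
    Measure.compProd_apply_prod hs ht, setLIntegral_map hs (M.K.measurable_coe ht)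
    (M.measurable_S j), Measure.restrict_restrict (M.measurable_S j hs),
    ← M.measure_inter_preimage_succ hx ((M.stronglyAdapted j).measurable hs |>.inter hA) ht]
  congr 1
  ext ω
  simp [and_comm, and_assoc]

theorem setIntegral_comp_pair (hx : 0 < x) {j : ℕ} {A : Set Ω} (hA : MeasurableSet[M.F j] A)
    {f : ℝ × ℝ → ℝ} (hf : BoundedMeasurable f) :
    ∫ ω in A, f (M.S j ω, M.S (j + 1) ω) ∂M.P x
      = ∫ ω in A, ∫ z, f (M.S j ω, z) ∂M.K (M.S j ω) ∂M.P x := by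
  have := M.prob x hx
  have := M.markov
  have hpair := (M.measurable_S j).prodMk (M.measurable_S (j + 1))
  rw [← integral_map hpair.aemeasurable hf.1.aestronglyMeasurable,
    M.map_restrict_pair_eq_compProd hx hA, Measure.integral_compProd (hf.integrable _),
    integral_map (M.measurable_S j).aemeasurable hf.integral_kernel.1.aestronglyMeasurable]

theorem measurableSet_monoEvent_F (k n : ℕ) : MeasurableSet[M.F n] (monoEvent M.S k n) :=
  measurableSet_monoEvent fun j hj => ((M.stronglyAdapted j).mono (M.F.mono hj)).measurable

theorem integral_comp_S_zero (hx : 0 < x) (g : ℝ → ℝ) : ∫ ω, g (M.S 0 ω) ∂M.P x = g x := by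
  have := M.prob x hx
  rw [integral_congr_ae ((M.start x hx).mono fun ω h => by rw [h]), integral_const, probReal_univ,
    one_smul]

noncomputable def upInt (g : ℝ → ℝ) (u : ℝ) : ℝ := ∫ z in Ici u, g z ∂M.K u

noncomputable def downInt (g : ℝ → ℝ) (u : ℝ) : ℝ := ∫ z in Iio u, g z ∂M.K u

theorem upInt_eq_integral_indicator (g : ℝ → ℝ) (u : ℝ) :
    M.upInt g u = ∫ z, {p : ℝ × ℝ | p.1 ≤ p.2}.indicator (fun p => g p.2) (u, z) ∂M.K u := by
  rw [upInt, ← integral_indicator measurableSet_Ici]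
  rfl

theorem downInt_eq_integral_indicator (g : ℝ → ℝ) (u : ℝ) :
    M.downInt g u = ∫ z, {p : ℝ × ℝ | p.2 < p.1}.indicator (fun p => g p.2) (u, z) ∂M.K u := by
  rw [downInt, ← integral_indicator measurableSet_Iio]
  rfl

variable {M} {g : ℝ → ℝ}

theorem boundedMeasurable_upInt (hg : BoundedMeasurable g) : BoundedMeasurable (M.upInt g) := by
  have := M.markov
  rw [funext (M.upInt_eq_integral_indicator g)]
  exact ((hg.comp measurable_snd).indicator
    (measurableSet_le measurable_fst measurable_snd)).integral_kernel

theorem boundedMeasurable_downInt (hg : BoundedMeasurable g) :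
    BoundedMeasurable (M.downInt g) := by
  have := M.markov
  rw [funext (M.downInt_eq_integral_indicator g)]
  exact ((hg.comp measurable_snd).indicator
    (measurableSet_lt measurable_snd measurable_fst)).integral_kernel

theorem boundedMeasurable_upInt_iterate (hg : BoundedMeasurable g) (k : ℕ) :
    BoundedMeasurable (M.upInt^[k] g) := by
  induction k generalizing g with
  | zero => exact hg
  | succ k ih => exact ih (boundedMeasurable_upInt hg)

variable (M)

theorem setIntegral_monoEvent (hx : 0 < x) (j : ℕ) {g : ℝ → ℝ} (hg : BoundedMeasurable g) :
    ∫ ω in monoEvent M.S 0 j, g (M.S j ω) ∂M.P x = M.upInt^[j] g x := by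
  induction j generalizing g with
  | zero =>
    have huniv : monoEvent M.S 0 0 = univ := by ext; simp [monoEvent]
    rw [huniv, Measure.restrict_univ, M.integral_comp_S_zero hx]
    rfl
  | succ j ih =>
    calc ∫ ω in monoEvent M.S 0 (j + 1), g (M.S (j + 1) ω) ∂M.P x
        = ∫ ω in monoEvent M.S 0 j,
            {p : ℝ × ℝ | p.1 ≤ p.2}.indicator (fun p => g p.2) (M.S j ω, M.S (j + 1) ω)
              ∂M.P x := by
          rw [monoEvent_succ _ (Nat.zero_le j), ← setIntegral_indicator
            (measurableSet_le (M.measurable_S j) (M.measurable_S (j + 1)))]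
          rfl
      _ = ∫ ω in monoEvent M.S 0 j, M.upInt g (M.S j ω) ∂M.P x := by
          rw [M.setIntegral_comp_pair hx (M.measurableSet_monoEvent_F 0 j)
            ((hg.comp measurable_snd).indicator (measurableSet_le measurable_fst measurable_snd))]
          simp_rw [upInt_eq_integral_indicator]
      _ = M.upInt^[j + 1] g x := ih (boundedMeasurable_upInt hg)

-- `E_x[h(S_{τ₁ ∧ n})]` (`integral_comp_stoppedAt`): the `k`-th summand is the contribution of a
-- first drawdown at time `k + 1`, the last term that of `n` consecutive up-moves.
noncomputable def stoppedMean (h : ℝ → ℝ) (n : ℕ) (u : ℝ) : ℝ :=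
  ∑ k ∈ Finset.range n, M.upInt^[k] (M.downInt h) u + M.upInt^[n] h u

variable {M} {h : ℝ → ℝ}

theorem boundedMeasurable_stoppedMean (hh : BoundedMeasurable h) (n : ℕ) :
    BoundedMeasurable (M.stoppedMean h n) :=
  (BoundedMeasurable.finset_sum _ fun k _ =>
    boundedMeasurable_upInt_iterate (boundedMeasurable_downInt hh) k).add
    (boundedMeasurable_upInt_iterate hh n)

theorem stoppedMean_succ (hh : BoundedMeasurable h) (n : ℕ) (u : ℝ) :
    M.stoppedMean h (n + 1) u = M.downInt h u + M.upInt (M.stoppedMean h n) u := by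
  have := M.markov
  have hint {f : ℝ → ℝ} (hf : BoundedMeasurable f) : Integrable f ((M.K u).restrict (Ici u)) :=
    hf.integrable _
  have hL := boundedMeasurable_downInt (M := M) hh
  rw [upInt]
  simp only [stoppedMean]
  rw [integral_add (integrable_finsetSum _ fun k _ => hint (boundedMeasurable_upInt_iterate hL k))
    (hint (boundedMeasurable_upInt_iterate hh n)),
    integral_finsetSum _ fun k _ => hint (boundedMeasurable_upInt_iterate hL k),
    Finset.sum_range_succ']
  change ∑ k ∈ Finset.range n, M.upInt^[k + 1] (M.downInt h) u + M.downInt h u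
      + M.upInt^[n + 1] h u
    = M.downInt h u + (∑ k ∈ Finset.range n, M.upInt (M.upInt^[k] (M.downInt h)) u
      + M.upInt (M.upInt^[n] h) u)
  simp only [Function.iterate_succ_apply']
  ring

variable (M)

theorem integral_comp_stoppedAt (hx : 0 < x) (hh : BoundedMeasurable h) (n : ℕ) :
    ∫ ω, h (stoppedAt M.S (drawdown M.S 1) n ω) ∂M.P x = M.stoppedMean h n x := by
  have := M.prob x hx
  have := M.markov
  induction n with
  | zero =>
    simp [stoppedAt_zero, M.integral_comp_S_zero hx, stoppedMean]
  | succ n ih =>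
    have hmono := M.measurableSet_monoEvent_F 0 n
    have hsplit (u : ℝ) : ∫ z, h z ∂M.K u = M.downInt h u + M.upInt h u := by
      rw [downInt, upInt, ← compl_Iio, integral_add_compl measurableSet_Iio (hh.integrable _)]
    have hnext : ∫ ω in monoEvent M.S 0 n, h (M.S (n + 1) ω) ∂M.P x
        = M.upInt^[n] (M.downInt h) x + M.upInt^[n + 1] h x := by
      rw [M.setIntegral_comp_pair hx hmono (hh.comp measurable_snd)]
      simp only [hsplit]
      rw [integral_add
        (((boundedMeasurable_downInt hh).comp (M.measurable_S n)).integrable _).integrableOn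
        (((boundedMeasurable_upInt hh).comp (M.measurable_S n)).integrable _).integrableOn,
        M.setIntegral_monoEvent hx n (boundedMeasurable_downInt hh),
        M.setIntegral_monoEvent hx n (boundedMeasurable_upInt hh)]
      rfl
    rw [integral_comp_stoppedAt_drawdown_succ M.measurable_S
      (fun k => (hh.comp (M.measurable_S k)).integrable _), ih, hnext,
      M.setIntegral_monoEvent hx n hh]
    simp only [stoppedMean, Finset.sum_range_succ]
    ring

noncomputable def drawdownValue : Ω → ℝ := evalAt M.S M.Sinf (drawdown M.S 1)

noncomputable def drawdownMean (h : ℝ → ℝ) (u : ℝ) : ℝ := ∫ ω, h (M.drawdownValue ω) ∂M.P u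

theorem ae_tendsto_stoppedAt (hx : 0 < x) : ∀ᵐ ω ∂M.P x,
    Tendsto (fun n => stoppedAt M.S (drawdown M.S 1) n ω) atTop (𝓝 (M.drawdownValue ω)) :=
  (M.conv x hx).mono fun _ hω => tendsto_stoppedAt_evalAt _ hω

theorem aestronglyMeasurable_drawdownValue (hx : 0 < x) :
    AEStronglyMeasurable M.drawdownValue (M.P x) :=
  aestronglyMeasurable_of_tendsto_ae atTop
    (fun n => (measurable_stoppedAt_drawdown M.measurable_S n).aestronglyMeasurable)
    (M.ae_tendsto_stoppedAt hx)

variable {M}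

theorem tendsto_stoppedMean (hx : 0 < x) (hc : Continuous h) (hh : BoundedMeasurable h) :
    Tendsto (fun n => M.stoppedMean h n x) atTop (𝓝 (M.drawdownMean h x)) := by
  have := M.prob x hx
  obtain ⟨C, hC⟩ := hh.2
  simp_rw [← M.integral_comp_stoppedAt hx hh]
  refine tendsto_integral_of_dominated_convergence (fun _ => C)
    (fun n => (hh.comp (measurable_stoppedAt_drawdown M.measurable_S n)).1.aestronglyMeasurable)
    (integrable_const C) (fun n => .of_forall fun ω => (Real.norm_eq_abs _).trans_le (hC _)) ?_
  exact (M.ae_tendsto_stoppedAt hx).mono fun ω hω => (hc.tendsto _).comp hω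

theorem aestronglyMeasurable_drawdownMean (hc : Continuous h) (hh : BoundedMeasurable h)
    {μ : Measure ℝ} (hμ : ∀ᵐ z ∂μ, 0 < z) : AEStronglyMeasurable (M.drawdownMean h) μ :=
  aestronglyMeasurable_of_tendsto_ae atTop
    (fun n => (boundedMeasurable_stoppedMean hh n).1.aestronglyMeasurable)
    (hμ.mono fun _ hz => tendsto_stoppedMean hz hc hh)

theorem drawdownMean_eq (hx : 0 < x) (hc : Continuous h) (hh : BoundedMeasurable h) :
    M.drawdownMean h x = M.downInt h x + M.upInt (M.drawdownMean h) x := by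
  have := M.markov
  obtain ⟨C, hC⟩ := hh.2
  have hpos := ae_restrict_Ici_pos (μ := M.K x) hx
  have hbound (n : ℕ) : ∀ᵐ z ∂(M.K x).restrict (Ici x), ‖M.stoppedMean h n z‖ ≤ C := by
    refine hpos.mono fun z hz => ?_
    have := M.prob z hz
    rw [← M.integral_comp_stoppedAt hz hh]
    simpa using norm_integral_le_of_norm_le_const (μ := M.P z)
      (.of_forall fun ω => (Real.norm_eq_abs _).trans_le (hC _))
  have hup : Tendsto (fun n => M.upInt (M.stoppedMean h n) x) atTop
      (𝓝 (M.upInt (M.drawdownMean h) x)) :=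
    tendsto_integral_of_dominated_convergence (fun _ => C)
      (fun n => (boundedMeasurable_stoppedMean hh n).1.aestronglyMeasurable) (integrable_const C)
      hbound (hpos.mono fun _ hz => tendsto_stoppedMean hz hc hh)
  refine tendsto_nhds_unique ((tendsto_stoppedMean hx hc hh).comp (tendsto_add_atTop_nat 1)) ?_
  simpa only [Function.comp_def, stoppedMean_succ hh] using hup.const_add (M.downInt h x)

variable (M)

theorem integral_stoppedAt (hx : 0 < x) (n : ℕ) :
    ∫ ω, stoppedAt M.S (drawdown M.S 1) n ω ∂M.P x = x := by
  have := M.prob x hx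
  induction n with
  | zero =>
    simpa [stoppedAt_zero] using M.integral_comp_S_zero hx id
  | succ n ih =>
    have hstep := integral_comp_stoppedAt_drawdown_succ (f := id) M.measurable_S
      (M.mart x hx).integrable n
    simp only [id] at hstep
    rw [hstep, ih, (M.mart x hx).setIntegral_eq (Nat.le_succ n)
      (M.measurableSet_monoEvent_F 0 n), sub_self, add_zero]

theorem ae_drawdownValue_nonneg (hx : 0 < x) : ∀ᵐ ω ∂M.P x, 0 ≤ M.drawdownValue ω := by
  filter_upwards [M.ae_tendsto_stoppedAt hx, M.pos x hx] with ω hlim hpos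
  exact ge_of_tendsto' hlim fun n => (hpos _).le

theorem lintegral_drawdownValue_le (hx : 0 < x) :
    ∫⁻ ω, ENNReal.ofReal (M.drawdownValue ω) ∂M.P x ≤ ENNReal.ofReal x := by
  have hstop (n : ℕ) : ∫⁻ ω, ENNReal.ofReal (stoppedAt M.S (drawdown M.S 1) n ω) ∂M.P x
      = ENNReal.ofReal x := by
    rw [← ofReal_integral_eq_lintegral_ofReal, M.integral_stoppedAt hx]
    · exact integrable_comp_stoppedAt_drawdown (f := id) M.measurable_S (M.mart x hx).integrable n
    · exact (M.pos x hx).mono fun ω hω => (hω _).le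
  calc ∫⁻ ω, ENNReal.ofReal (M.drawdownValue ω) ∂M.P x
      = ∫⁻ ω, liminf (fun n => ENNReal.ofReal (stoppedAt M.S (drawdown M.S 1) n ω)) atTop ∂M.P x :=
        lintegral_congr_ae <| (M.ae_tendsto_stoppedAt hx).mono fun ω hω =>
          ((ENNReal.continuous_ofReal.tendsto _).comp hω).liminf_eq.symm
    _ ≤ liminf (fun n => ∫⁻ ω, ENNReal.ofReal (stoppedAt M.S (drawdown M.S 1) n ω) ∂M.P x)
          atTop :=
        lintegral_liminf_le fun n => (measurable_stoppedAt_drawdown M.measurable_S n).ennreal_ofReal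
    _ = ENNReal.ofReal x := by simp [hstop]

theorem integrable_drawdownValue (hx : 0 < x) : Integrable M.drawdownValue (M.P x) :=
  ⟨M.aestronglyMeasurable_drawdownValue hx,
    (hasFiniteIntegral_iff_ofReal (M.ae_drawdownValue_nonneg hx)).mpr
      ((M.lintegral_drawdownValue_le hx).trans_lt ENNReal.ofReal_lt_top)⟩

theorem integral_drawdownValue_le (hx : 0 < x) : ∫ ω, M.drawdownValue ω ∂M.P x ≤ x := by
  rw [integral_eq_lintegral_of_nonneg_ae (M.ae_drawdownValue_nonneg hx)
    (M.aestronglyMeasurable_drawdownValue hx)]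
  exact ENNReal.toReal_le_of_le_ofReal hx.le (M.lintegral_drawdownValue_le hx)

theorem abs_drawdownMean_le (hx : 0 < x) {h : ℝ → ℝ} (hh : ∀ z, |h z| ≤ |z|) :
    |M.drawdownMean h x| ≤ x := by
  calc |M.drawdownMean h x| ≤ ∫ ω, |M.drawdownValue ω| ∂M.P x :=
        norm_integral_le_of_norm_le (M.integrable_drawdownValue hx).abs
          (.of_forall fun ω => (Real.norm_eq_abs _).trans_le (hh _))
    _ = ∫ ω, M.drawdownValue ω ∂M.P x :=
        integral_congr_ae ((M.ae_drawdownValue_nonneg hx).mono fun ω hω => abs_of_nonneg hω)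
    _ ≤ x := M.integral_drawdownValue_le hx

theorem ae_kernel_pos (hx : 0 < x) : ∀ᵐ z ∂M.K x, 0 < z :=
  (measure_eq_zero_iff_ae_notMem.mp (M.kernel_pos x hx)).mono fun _ hz => not_le.mp hz

theorem tendsto_drawdownMean_truncAt (hx : 0 < x) :
    Tendsto (fun m : ℕ => M.drawdownMean (truncAt m) x) atTop (𝓝 (M.drawdownMean id x)) :=
  tendsto_integral_of_dominated_convergence (fun ω => |M.drawdownValue ω|)
    (fun m => (continuous_truncAt m).comp_aestronglyMeasurable
      (M.aestronglyMeasurable_drawdownValue hx))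
    (M.integrable_drawdownValue hx).abs (fun m => .of_forall fun ω => abs_truncAt_le m _)
    ((M.ae_drawdownValue_nonneg hx).mono fun ω hω => by
      simpa [max_eq_right hω] using tendsto_truncAt (M.drawdownValue ω))

theorem aestronglyMeasurable_drawdownMean_id {μ : Measure ℝ} (hμ : ∀ᵐ z ∂μ, 0 < z) :
    AEStronglyMeasurable (M.drawdownMean id) μ :=
  aestronglyMeasurable_of_tendsto_ae atTop
    (fun m => aestronglyMeasurable_drawdownMean (continuous_truncAt m)
      (boundedMeasurable_truncAt m) hμ)
    (hμ.mono fun _ hz => M.tendsto_drawdownMean_truncAt hz)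

theorem drawdownMean_id_eq (hx : 0 < x) :
    M.drawdownMean id x = M.downInt id x + M.upInt (M.drawdownMean id) x := by
  have hpos := ae_restrict_Ici_pos (μ := M.K x) hx
  have hid : Integrable (fun z : ℝ => z) (M.K x) := M.kernel_int x hx
  have hdown : Tendsto (fun m : ℕ => M.downInt (truncAt m) x) atTop (𝓝 (M.downInt id x)) :=
    tendsto_integral_of_dominated_convergence (fun z => |z|)
      (fun m => (continuous_truncAt m).aestronglyMeasurable) hid.abs.restrict
      (fun m => .of_forall fun z => abs_truncAt_le m z)
      (ae_restrict_of_ae ((M.ae_kernel_pos hx).mono fun z hz => by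
        simpa [max_eq_right hz.le] using tendsto_truncAt z))
  have hup : Tendsto (fun m : ℕ => M.upInt (M.drawdownMean (truncAt m)) x) atTop
      (𝓝 (M.upInt (M.drawdownMean id) x)) :=
    tendsto_integral_of_dominated_convergence (fun z => z)
      (fun m => aestronglyMeasurable_drawdownMean (continuous_truncAt m)
        (boundedMeasurable_truncAt m) hpos) hid.restrict
      (fun m => hpos.mono fun z hz => M.abs_drawdownMean_le hz (abs_truncAt_le m))
      (hpos.mono fun z hz => M.tendsto_drawdownMean_truncAt hz)
  refine tendsto_nhds_unique (M.tendsto_drawdownMean_truncAt hx) ?_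
  simpa only [drawdownMean_eq hx (continuous_truncAt _) (boundedMeasurable_truncAt _)]
    using hdown.add hup

theorem integrableOn_drawdownMean_id (hx : 0 < x) :
    IntegrableOn (M.drawdownMean id) (Ici x) (M.K x) := by
  have hpos := ae_restrict_Ici_pos (μ := M.K x) hx
  exact (M.kernel_int x hx).restrict.mono' (M.aestronglyMeasurable_drawdownMean_id hpos)
    (hpos.mono fun z hz => M.abs_drawdownMean_le hz fun _ => le_rfl)

end MarkovMartingale

/-- The default function `M_S` solves the homogeneous Volterra integral
equation `M_S(x) = ∫_{[x,∞)} M_S(y) K(x,dy)` for all `x > 0`. -/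
theorem MarkovMartingale.defaultFn_volterra
    {Ω : Type*} [MeasurableSpace Ω] (M : MarkovMartingale Ω) :
    ∀ x : ℝ, 0 < x → M.defaultFn x = ∫ y in Set.Ici x, M.defaultFn y ∂(M.K x) := by
  intro x hx
  have hmean := M.drawdownMean_id_eq hx
  have hsplit : M.downInt id x + M.upInt id x = x := by
    rw [downInt, upInt, ← compl_Iio, integral_add_compl measurableSet_Iio (M.kernel_int x hx)]
    exact M.kernel_mart x hx
  calc M.defaultFn x = M.upInt id x - M.upInt (M.drawdownMean id) x := by
        change x - M.drawdownMean id x = _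
        linarith
    _ = ∫ y in Ici x, M.defaultFn y ∂M.K x :=
        (integral_sub (M.kernel_int x hx).integrableOn (M.integrableOn_drawdownMean_id hx)).symm
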